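/- arXiv:1407.3261 — 4 statements merged into one kernel-verified Lean document; each statement's English description precedes it below -/
import Mathlib

section
/- For an odd positive integer c and an integer d coprime to c, the Jacobi symbol satisfies (d/c) = (-1)^{(1/2)((c-1)/2 - 6c·s(d,c))}, where s(d,c) is the Dedekind sum. -/
/-
Write `f n = ⌊n h / k⌋`. Expanding the sawtooth functions gives
`6 k s(h, k) = h (k - 1)(2k - 1) - 3 k (k - 1)/2 - 6 C` with `C = ∑_{0<n<k} n f n`, once `∑ f n`
is evaluated by the symmetry `f n + f (k - n) = h - 1` (valid as `k ∤ n h`). For odd `h` and `k`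
the same symmetry gives `C ≡ ∑_{0<n≤k/2} f n (mod 2)`, so `(k - 1)/2 - 6 k s(h, k) = 2 m` with
`m` of the parity of the exponent in Eisenstein's lemma `(h/k) = (-1)^(∑_{0<n≤k/2} f n)`.
For the Jacobi symbol this lemma follows by induction on `k`: move `h` into `(-k, k)` modulo `2k`,
then combine quadratic reciprocity with the lattice-point identity
`∑_{a ≤ p/2} ⌊a q/p⌋ + ∑_{b ≤ q/2} ⌊b p/q⌋ = (p/2)(q/2)`.
An arbitrary `d` is replaced by the odd number `d + c (d + 1) ≡ d (mod c)`.
-/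

/-- The sawtooth function `((x))`. -/
def dedekindSaw (x : ℚ) : ℚ := if Int.fract x = 0 then 0 else Int.fract x - 1/2

/-- The Dedekind sum `s(h,k) = ∑_{n=1}^{k} ((hn/k))((n/k))`. -/
noncomputable def dedekindSum (h k : ℤ) : ℚ :=
  ∑ n ∈ Finset.Icc (1 : ℤ) k, dedekindSaw ((h : ℚ) * n / k) * dedekindSaw ((n : ℚ) / k)

open Finset

namespace Nat

theorem sum_Icc_mul_div_eq_card_filter (p q : ℕ) :
    ∑ a ∈ Icc 1 (p / 2), a * q / p =
      #{x ∈ Icc 1 (p / 2) ×ˢ Icc 1 (q / 2) | x.2 * p ≤ x.1 * q} := by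
  rcases p.eq_zero_or_pos with rfl | hp
  · simp
  have hdiv : ∀ a ∈ Icc 1 (p / 2), a * q / p = #{b ∈ Icc 1 (q / 2) | b * p ≤ a * q} := by
    intro a ha
    have hle : a * q / p ≤ q / 2 := calc
      a * q / p ≤ p / 2 * q / p := by gcongr; exact (mem_Icc.mp ha).2
      _ ≤ q / 2 := Nat.div_mul_div_le_div _ _ _
    simpa only [Nat.succ_eq_add_one, Ico_add_one_right_eq_Icc] using
      ZMod.div_eq_filter_card hp hle
  rw [sum_congr rfl hdiv]
  simp only [card_eq_sum_ones, sum_filter, sum_product]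

/-- The two sums count the lattice points of `[1, p/2] × [1, q/2]` on either side of the
diagonal `y p = x q`, which by coprimality carries none of them. -/
theorem sum_Icc_mul_div_add_sum_Icc_mul_div {p q : ℕ} (hpq : p.Coprime q) :
    ∑ a ∈ Icc 1 (p / 2), a * q / p + ∑ b ∈ Icc 1 (q / 2), b * p / q = p / 2 * (q / 2) := by
  set R := Icc 1 (p / 2) ×ˢ Icc 1 (q / 2)
  have hswap : #{x ∈ Icc 1 (q / 2) ×ˢ Icc 1 (p / 2) | x.2 * q ≤ x.1 * p} =
      #{x ∈ R | x.1 * q ≤ x.2 * p} :=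
    card_equiv (Equiv.prodComm _ _) fun x => by simp [R, and_comm]
  have hdiag : ∀ x ∈ R, x.2 * p ≠ x.1 * q := by
    intro x hx heq
    have hx1 := (mem_Icc.mp (mem_product.mp hx).1)
    have : p ∣ x.1 := hpq.dvd_of_dvd_mul_right ⟨x.2, by rw [← heq, mul_comm]⟩
    have := Nat.le_of_dvd (by omega) this
    omega
  have hcompl : #{x ∈ R | x.1 * q ≤ x.2 * p} = #{x ∈ R | ¬ x.2 * p ≤ x.1 * q} := by
    congr 1
    refine filter_congr fun x hx => ?_
    have := hdiag x hx
    omega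
  rw [sum_Icc_mul_div_eq_card_filter, sum_Icc_mul_div_eq_card_filter, hswap, hcompl,
    card_filter_add_card_filter_not, card_product, Nat.card_Icc, Nat.card_Icc,
    Nat.add_sub_cancel, Nat.add_sub_cancel]

end Nat

namespace Int

theorem neg_ediv_of_not_dvd {a b : ℤ} (hb : 0 < b) (h : ¬ b ∣ a) : -a / b = -(a / b) - 1 := by
  rw [Int.neg_ediv, if_neg h, Int.sign_eq_one_of_pos hb]

theorem natCast_not_dvd_mul {h : ℤ} {k n : ℕ} (hcop : IsCoprime h k) (hn : 0 < n)
    (hnk : n < k) :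
    ¬ (k : ℤ) ∣ n * h := fun hdvd =>
  have := Int.le_of_dvd (by positivity) (hcop.symm.dvd_of_dvd_mul_right hdvd)
  by omega

end Int

theorem two_mul_sum_Ico_one_natCast {R : Type*} [CommRing R] (k : ℕ) :
    2 * ∑ n ∈ Ico 1 k, (n : R) = k * (k - 1) := by
  induction k with
  | zero => simp
  | succ k ih =>
    rcases k.eq_zero_or_pos with rfl | hk
    · simp
    rw [sum_Ico_succ_top hk, mul_add, ih]; push_cast; ring

theorem six_mul_sum_Ico_one_natCast_sq {R : Type*} [CommRing R] (k : ℕ) :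
    6 * ∑ n ∈ Ico 1 k, (n : R) ^ 2 = (k - 1) * k * (2 * k - 1) := by
  induction k with
  | zero => simp
  | succ k ih =>
    rcases k.eq_zero_or_pos with rfl | hk
    · simp
    rw [sum_Ico_succ_top hk, mul_add, ih]; push_cast; ring

theorem sum_Ico_one_eq_sum_Icc_add_reflect {M : Type*} [AddCommMonoid M] {k : ℕ} (hk : Odd k)
    (g : ℕ → M) : ∑ n ∈ Ico 1 k, g n = ∑ n ∈ Icc 1 (k / 2), (g n + g (k - n)) := by
  obtain ⟨b, rfl⟩ := hk
  have hb : (2 * b + 1) / 2 = b := by omega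
  rw [hb, sum_add_distrib, ← Ico_add_one_right_eq_Icc, sum_Ico_reflect g 1 (by omega),
    show 2 * b + 1 + 1 - (b + 1) = b + 1 by omega, Nat.add_sub_cancel,
    sum_Ico_consecutive g (by omega) (by omega)]

def eisensteinSum (h : ℤ) (k : ℕ) : ℤ := ∑ n ∈ Icc 1 (k / 2), n * h / k

theorem eisensteinSum_add_eisensteinSum {p q : ℕ} (hpq : p.Coprime q) :
    eisensteinSum q p + eisensteinSum p q = ((p / 2 * (q / 2) : ℕ) : ℤ) := by
  rw [← Nat.sum_Icc_mul_div_add_sum_Icc_mul_div hpq]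
  simp [eisensteinSum]

theorem negOnePow_eisensteinSum_add_two_mul_mul (h : ℤ) (k : ℕ) (q : ℤ) :
    (eisensteinSum (h + 2 * k * q) k).negOnePow = (eisensteinSum h k).negOnePow := by
  rcases k.eq_zero_or_pos with rfl | hk
  · simp [eisensteinSum]
  have hshift : eisensteinSum (h + 2 * k * q) k =
      eisensteinSum h k + 2 * ∑ n ∈ Icc 1 (k / 2), q * n := by
    rw [eisensteinSum, eisensteinSum, mul_sum, ← sum_add_distrib]
    refine sum_congr rfl fun n _ => ?_
    rw [show (n : ℤ) * (h + 2 * k * q) = n * h + 2 * q * n * k by ring,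
      Int.add_mul_ediv_right _ _ (by positivity)]
    ring
  rw [hshift, Int.negOnePow_add, Int.negOnePow_two_mul, mul_one]

theorem eisensteinSum_neg {h : ℤ} {k : ℕ} (hcop : IsCoprime h k) :
    eisensteinSum (-h) k = -eisensteinSum h k - (k / 2 : ℕ) := by
  have hterm : ∀ n ∈ Icc 1 (k / 2), n * -h / k = -(n * h / k) - 1 := fun n hn => by
    obtain ⟨hn1, hn2⟩ := mem_Icc.mp hn
    rw [mul_neg, Int.neg_ediv_of_not_dvd (by omega) (Int.natCast_not_dvd_mul hcop hn1 (by omega))]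
  rw [eisensteinSum, eisensteinSum, sum_congr rfl hterm, sum_sub_distrib, sum_neg_distrib,
    sum_const, Nat.card_Icc, Nat.add_sub_cancel, nsmul_one]

theorem jacobiSym_eq_negOnePow_eisensteinSum_of_swap {n k : ℕ} (hn : Odd n) (hk : Odd k)
    (hcop : n.Coprime k) (hswap : jacobiSym k n = (eisensteinSum k n).negOnePow) :
    jacobiSym n k = (eisensteinSum n k).negOnePow := by
  have hsum := eisensteinSum_add_eisensteinSum hcop
  rw [jacobiSym.quadratic_reciprocity hn hk, hswap, ← Int.coe_negOnePow_natCast,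
    ← Units.val_mul, ← Int.negOnePow_add, Units.val_inj, Int.negOnePow_eq_iff]
  exact ⟨eisensteinSum k n, by omega⟩

theorem jacobiSym_neg_eq_negOnePow_eisensteinSum {h : ℤ} {k : ℕ} (hk : Odd k)
    (hcop : IsCoprime h k) (H : jacobiSym h k = (eisensteinSum h k).negOnePow) :
    jacobiSym (-h) k = (eisensteinSum (-h) k).negOnePow := by
  rw [jacobiSym.neg _ hk, ZMod.χ₄_eq_neg_one_pow (Nat.odd_iff.mp hk), H,
    eisensteinSum_neg hcop, Int.negOnePow_sub, Int.negOnePow_neg, ← Int.coe_negOnePow_natCast,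
    ← Units.val_mul, mul_comm]

theorem jacobiSym_add_two_mul_mul_eq_negOnePow_eisensteinSum {h : ℤ} {k : ℕ} (q : ℤ)
    (H : jacobiSym h k = (eisensteinSum h k).negOnePow) :
    jacobiSym (h + 2 * k * q) k = (eisensteinSum (h + 2 * k * q) k).negOnePow := by
  rw [negOnePow_eisensteinSum_add_two_mul_mul, ← H]
  exact jacobiSym.mod_left' (by rw [mul_comm 2, mul_assoc, Int.add_mul_emod_self_left])

theorem jacobiSym_eq_negOnePow_eisensteinSum {h : ℤ} {k : ℕ} (hk : Odd k) (hh : Odd h)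
    (hcop : IsCoprime h k) : jacobiSym h k = (eisensteinSum h k).negOnePow := by
  induction k using Nat.strong_induction_on generalizing h with
  | _ k ih =>
  obtain rfl | hk1 : k = 1 ∨ 1 < k := by have := hk.pos; omega
  · simp [eisensteinSum]
  have hnat : ∀ n : ℕ, n < k → Odd n → n.Coprime k →
      jacobiSym n k = (eisensteinSum n k).negOnePow := fun n hnk hn hnk' =>
    jacobiSym_eq_negOnePow_eisensteinSum_of_swap hn hk hnk'
      (ih n hnk hn (Int.odd_coe_nat k |>.mpr hk) (Nat.isCoprime_iff_coprime.mpr hnk'.symm))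
  set q := (h + k) / (2 * k)
  set h₀ := h - 2 * k * q
  have hh₀ : h = h₀ + 2 * k * q := by ring
  have hcop₀ : IsCoprime h₀ k := by
    rw [show h = h₀ + k * (2 * q) by ring] at hcop; exact hcop.of_add_mul_left_left
  have hodd₀ : Odd h₀ := by rw [hh₀] at hh; simpa [parity_simps] using hh
  have hbound : -k ≤ h₀ ∧ h₀ < k := by
    have : h₀ = (h + k) % (2 * k) - k := by rw [Int.emod_def]; ring
    have := Int.emod_nonneg (h + k) (by omega : (2 * k : ℤ) ≠ 0)
    have := Int.emod_lt_of_pos (h + k) (by omega : (0 : ℤ) < 2 * k)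
    omega
  have hne : h₀ ≠ -k := by
    rintro hk'
    rw [hk', IsCoprime.neg_left_iff, isCoprime_self, Int.isUnit_iff] at hcop₀
    omega
  rw [hh₀]
  apply jacobiSym_add_two_mul_mul_eq_negOnePow_eisensteinSum
  rcases Int.natAbs_eq h₀ with hpos | hneg
  · rw [hpos] at hodd₀ hcop₀ ⊢
    exact hnat _ (by omega) (Int.odd_coe_nat _ |>.mp hodd₀) (Nat.isCoprime_iff_coprime.mp hcop₀)
  · rw [hneg] at hodd₀ hcop₀ ⊢
    rw [odd_neg, Int.odd_coe_nat] at hodd₀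
    rw [IsCoprime.neg_left_iff, Nat.isCoprime_iff_coprime] at hcop₀
    exact jacobiSym_neg_eq_negOnePow_eisensteinSum hk (Nat.isCoprime_iff_coprime.mpr hcop₀)
      (hnat _ (by omega) hodd₀ hcop₀)

theorem mul_ediv_add_sub_mul_ediv {h : ℤ} {k n : ℕ} (hcop : IsCoprime h k) (hn : 0 < n)
    (hnk : n < k) :
    n * h / k + (k - n : ℕ) * h / k = h - 1 := by
  rw [Nat.cast_sub hnk.le, sub_mul, sub_eq_neg_add, mul_comm (k : ℤ),
    Int.add_mul_ediv_right _ _ (by omega), Int.neg_ediv_of_not_dvd (by omega)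
    (Int.natCast_not_dvd_mul hcop hn hnk)]
  ring

theorem two_mul_sum_Ico_one_mul_ediv {h : ℤ} {k : ℕ} (hk : 0 < k) (hcop : IsCoprime h k) :
    2 * ∑ n ∈ Ico 1 k, n * h / k = (h - 1) * (k - 1) := by
  have hreflect : ∑ n ∈ Ico 1 k, (k - n : ℕ) * h / k = ∑ n ∈ Ico 1 k, n * h / k := by
    simpa using sum_Ico_reflect (fun n => (n : ℤ) * h / k) 1 (by omega : k ≤ k + 1)
  rw [two_mul]
  nth_rw 2 [← hreflect]
  rw [← sum_add_distrib, sum_congr rfl fun n hn =>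
    mul_ediv_add_sub_mul_ediv hcop (mem_Ico.mp hn).1 (mem_Ico.mp hn).2]
  simp only [sum_const, Nat.card_Ico, nsmul_eq_mul]
  push_cast [Nat.cast_sub hk]
  ring

theorem even_sum_mul_ediv_sub_eisensteinSum {h : ℤ} {k : ℕ} (hk : Odd k) (hh : Odd h)
    (hcop : IsCoprime h k) : Even ((∑ n ∈ Ico 1 k, n * (n * h / k)) - eisensteinSum h k) := by
  rw [sum_Ico_one_eq_sum_Icc_add_reflect hk, eisensteinSum, ← sum_sub_distrib]
  refine even_sum _ fun n hn => ?_
  obtain ⟨hn1, hn2⟩ := mem_Icc.mp hn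
  have hpair := mul_ediv_add_sub_mul_ediv hcop hn1 (by omega : n < k)
  rw [← eq_sub_iff_add_eq'] at hpair
  rw [hpair, Nat.cast_sub (by omega : n ≤ k)]
  obtain ⟨a, rfl⟩ := hh
  obtain ⟨b, rfl⟩ := hk
  push_cast
  exact ⟨(n - b - 1) * (n * (2 * a + 1) / (2 * b + 1)) + (2 * b + 1 - n) * a, by ring⟩

theorem dedekindSaw_intCast_div {a : ℤ} {k : ℕ} (hk : 0 < k) (ha : ¬ (k : ℤ) ∣ a) :
    dedekindSaw (a / k) = a / k - ((a / k : ℤ) : ℚ) - 1 / 2 := by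
  have hfract : Int.fract ((a : ℚ) / k) ≠ 0 := by
    rw [Int.fract_div_intCast_eq_div_intCast_mod]
    exact div_ne_zero (by exact_mod_cast mt Int.dvd_of_emod_eq_zero ha) (by positivity)
  rw [dedekindSaw, if_neg hfract, Int.fract, Rat.floor_intCast_div_natCast]

theorem dedekindSum_eq_sum_Ico (h : ℤ) (k : ℕ) :
    dedekindSum h k = ∑ n ∈ Ico 1 k, dedekindSaw (h * n / k) * dedekindSaw (n / k) := by
  rcases k.eq_zero_or_pos with rfl | hk
  · simp [dedekindSum]
  have hIcc : Icc (1 : ℤ) k = (Icc 1 k).map Nat.castEmbedding := by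
    ext x
    simp only [mem_Icc, mem_map, Nat.castEmbedding_apply]
    exact ⟨fun hx => ⟨x.toNat, by omega, by omega⟩, by rintro ⟨n, hn, rfl⟩; omega⟩
  have hlast : dedekindSaw (k / k) = 0 := by
    simp [div_self (by positivity : (k : ℚ) ≠ 0), dedekindSaw]
  rw [dedekindSum, hIcc, sum_map, ← Ico_add_one_right_eq_Icc, sum_Ico_succ_top hk]
  simp [hlast]

theorem dedekindSaw_add_intCast (x : ℚ) (m : ℤ) : dedekindSaw (x + m) = dedekindSaw x := by
  simp only [dedekindSaw, Int.fract_add_intCast]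

theorem dedekindSum_add_mul_left (h k q : ℤ) : dedekindSum (h + k * q) k = dedekindSum h k := by
  rcases eq_or_ne k 0 with rfl | hk
  · simp
  refine sum_congr rfl fun n _ => ?_
  rw [← dedekindSaw_add_intCast ((h : ℚ) * n / k) (q * n)]
  congr 2
  push_cast
  field_simp

theorem six_mul_mul_dedekindSum {h : ℤ} {k : ℕ} (hk : 0 < k) (hcop : IsCoprime h k) :
    6 * k * dedekindSum h k = h * (k - 1) * (2 * k - 1) - 3 * k * (k - 1) / 2
      - 6 * ((∑ n ∈ Ico 1 k, n * (n * h / k) : ℤ) : ℚ) := by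
  set f : ℕ → ℚ := fun n => ((n * h / k : ℤ) : ℚ)
  have hterm : ∀ n ∈ Ico 1 k, 6 * k * (dedekindSaw (h * n / k) * dedekindSaw (n / k)) =
      6 * h / k * n ^ 2 - 3 * (h + 1) * n - 6 * (n * f n) + 3 * k * f n + 3 * k / 2 := by
    intro n hn
    obtain ⟨hn1, hnk⟩ := mem_Ico.mp hn
    have hsaw₁ := dedekindSaw_intCast_div hk (Int.natCast_not_dvd_mul hcop hn1 hnk)
    have hsaw₂ := dedekindSaw_intCast_div (a := n) hk
      (by simpa using Int.natCast_not_dvd_mul isCoprime_one_left hn1 hnk)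
    rw [Int.ediv_eq_zero_of_lt (by omega) (by omega)] at hsaw₂
    push_cast at hsaw₁ hsaw₂
    rw [mul_comm (h : ℚ), hsaw₁, hsaw₂]
    field_simp
    ring
  have hF : 2 * ∑ n ∈ Ico 1 k, f n = (h - 1) * (k - 1) := by
    have := congrArg (Int.cast : ℤ → ℚ) (two_mul_sum_Ico_one_mul_ediv hk hcop)
    push_cast at this
    exact this
  have hS₁ := two_mul_sum_Ico_one_natCast (R := ℚ) k
  have hS₂ := six_mul_sum_Ico_one_natCast_sq (R := ℚ) k
  rw [dedekindSum_eq_sum_Ico, mul_sum, sum_congr rfl hterm]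
  simp only [sum_add_distrib, sum_sub_distrib, ← mul_sum, sum_const, Nat.card_Ico, nsmul_eq_mul]
  push_cast [f, Nat.cast_sub hk]
  field_simp
  linear_combination (3 * k ^ 2) * hF - 3 * (h + 1) * k * hS₁ + 2 * h * hS₂

theorem exists_sub_six_mul_dedekindSum_eq_two_mul {h : ℤ} {k : ℕ} (hk : Odd k) (hh : Odd h)
    (hcop : IsCoprime h k) :
    ∃ m : ℤ, ((k : ℚ) - 1) / 2 - 6 * k * dedekindSum h k = 2 * m ∧
      Even (m - eisensteinSum h k) := by
  have hsum := six_mul_mul_dedekindSum hk.pos hcop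
  have hpar := even_sum_mul_ediv_sub_eisensteinSum hk hh hcop
  generalize (∑ n ∈ Ico 1 k, n * (n * h / k) : ℤ) = C at hsum hpar
  obtain ⟨b, rfl⟩ := hk
  obtain ⟨a, rfl⟩ := hh
  -- half of `(k - 1) / 2 - 6 k s(h, k)` as given by `six_mul_mul_dedekindSum` with `k = 2 b + 1`
  refine ⟨b * (3 * b + 2) - (2 * a + 1) * b * (4 * b + 1) + 3 * C, ?_, ?_⟩
  · rw [hsum]
    push_cast
    ring
  · obtain ⟨e, he⟩ := Int.even_mul_pred_self b
    obtain ⟨e', he'⟩ := hpar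
    exact ⟨-e - a * b * (4 * b + 1) + 3 * e' + eisensteinSum (2 * a + 1) (2 * b + 1), by
      linear_combination -he + 3 * he'⟩

theorem jacobiSym_eq_neg_one_pow_dedekindSum_general (d : ℤ) (c : ℕ) (hc : Odd c)
    (hcop : Int.gcd d c = 1) :
    ∃ m : ℤ, ((c : ℚ) - 1) / 2 - 6 * c * dedekindSum d c = 2 * m ∧
      (jacobiSym d c : ℚ) = (-1 : ℚ) ^ m := by
  set h := d + c * (d + 1)
  have hh : Odd h := by simp [h, hc, parity_simps]
  have hcop' : IsCoprime h c := (Int.isCoprime_iff_gcd_eq_one.mpr hcop).add_mul_left_left _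
  obtain ⟨m, hm, hmG⟩ := exists_sub_six_mul_dedekindSum_eq_two_mul hc hh hcop'
  refine ⟨m, by rwa [dedekindSum_add_mul_left] at hm, ?_⟩
  rw [← Int.cast_negOnePow, (Int.negOnePow_eq_iff _ _).mpr hmG,
    ← jacobiSym_eq_negOnePow_eisensteinSum hc hh hcop',
    jacobiSym.mod_left' (Int.add_mul_emod_self_left d c (d + 1)).symm]

theorem jacobiSym_eq_neg_one_pow_dedekindSum (d : ℤ) (c : ℕ) (hc : Odd c) (hcpos : 0 < c)
    (hcop : Int.gcd d c = 1) :
    ∃ m : ℤ, ((c : ℚ) - 1) / 2 - 6 * c * dedekindSum d c = 2 * m ∧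
      (jacobiSym d c : ℚ) = (-1 : ℚ) ^ m :=
  jacobiSym_eq_neg_one_pow_dedekindSum_general d c hc hcop
end

section
/- Let p ≡ 3 (mod 4) be prime and let I be a nonzero ideal of ℤ[√p] whose norm is divisible by 4. Then every element a + b√p of I has both a and b even; equivalently, I = (2)·I' for some ideal I'. -/
/-!
If `x = a + b√p` lies in `I`, then `N(I) = #(ℤ[√p] ⧸ I)` divides `#(ℤ[√p] ⧸ (x)) = |a² - p b²|`,
so `4 ∣ a² - p b²`. Since squares are `0` or `1` mod 4 and `p ≡ 3 (mod 4)`, this forces `a` and `b`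
to be even. Hence `I ⊆ (2)`, and then `I = (2) · (I : (2))`.

The index `#(ℤ[√p] ⧸ (x)) = |N(x)|` comes from the chain `(N(x)) ⊆ (x) ⊆ ℤ[√p]`:
multiplication by `x` identifies `(x) ⧸ (N(x))` with `ℤ[√p] ⧸ (x̄) ≅ ℤ[√p] ⧸ (x)`, and
`#(ℤ[√p] ⧸ (n)) = n²` for an integer `n`, so `#(ℤ[√p] ⧸ (x))² = N(x)²`.
-/

/-- The norm of an ideal of `ℤ[√p]`: the cardinality of the quotient ring. -/
noncomputable def idealNorm {d : ℤ} (I : Ideal (ℤ√d)) : ℕ := Nat.card (ℤ√d ⧸ I)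

theorem Int.even_and_even_of_four_dvd_sub_mul {a b d : ℤ} (hd : d % 4 = 3)
    (h : 4 ∣ a * a - d * b * b) : Even a ∧ Even b := by
  obtain ⟨k, rfl | rfl⟩ := Int.even_or_odd' a <;>
    obtain ⟨m, rfl | rfl⟩ := Int.even_or_odd' b <;>
    obtain ⟨t, rfl⟩ : ∃ t, d = 4 * t + 3 := ⟨d / 4, by omega⟩
  · exact ⟨even_two_mul k, even_two_mul m⟩
  all_goals exfalso; ring_nf at h; omega

theorem Ideal.span_singleton_mul_colon_of_le {R : Type*} [CommRing R] {I : Ideal R} {a : R}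
    (h : I ≤ Ideal.span {a}) : Ideal.span {a} * I.colon (Ideal.span {a}) = I := by
  refine le_antisymm (Ideal.mul_le.mpr fun r hr s hs => ?_) fun x hx => ?_
  · obtain ⟨c, rfl⟩ := Ideal.mem_span_singleton'.mp hr
    rw [mul_right_comm, mul_assoc]
    exact I.mul_mem_left c (Ideal.mem_colon_span_singleton.mp hs)
  · obtain ⟨z, rfl⟩ := Ideal.mem_span_singleton'.mp (h hx)
    exact Ideal.mem_span_singleton_mul.mpr
      ⟨z, Ideal.mem_colon_span_singleton.mpr hx, mul_comm a z⟩

theorem Ideal.card_quotient_span_star {R : Type*} [CommRing R] [StarRing R] (x : R) :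
    Nat.card (R ⧸ Ideal.span {star x}) = Nat.card (R ⧸ Ideal.span {x}) := by
  refine (Nat.card_congr (Ideal.quotientEquiv _ _ (starRingAut : R ≃+* R) ?_).toEquiv).symm
  rw [Ideal.map_span, Set.image_singleton]
  rfl

namespace Zsqrtd
variable {d : ℤ}

theorem card_quotient_span_intCast (n : ℤ) :
    Nat.card (ℤ√d ⧸ Ideal.span {(n : ℤ√d)}) = n.natAbs ^ 2 := by
  let f : ℤ√d →+ ZMod n.natAbs × ZMod n.natAbs :=
    { toFun z := (z.re, z.im)
      map_zero' := by simp
      map_add' a b := by simp }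
  have hf : Function.Surjective f := fun ⟨u, v⟩ =>
    ⟨⟨u.valMinAbs, v.valMinAbs⟩, by simp [f]⟩
  have hker : f.ker = (Ideal.span {(n : ℤ√d)}).toAddSubgroup := by
    ext z
    simp [f, Ideal.mem_span_singleton, intCast_dvd, ZMod.intCast_zmod_eq_zero_iff_dvd]
  calc Nat.card (ℤ√d ⧸ Ideal.span {(n : ℤ√d)})
      = Nat.card (ℤ√d ⧸ f.ker) := by rw [hker]; rfl
    _ = n.natAbs ^ 2 := by
      rw [Nat.card_congr (QuotientAddGroup.quotientKerEquivOfSurjective f hf).toEquiv,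
        Nat.card_prod, Nat.card_zmod, sq]

theorem isLeftRegular_of_norm_ne_zero {x : ℤ√d} (hx : x.norm ≠ 0) : IsLeftRegular x := by
  intro a b hab
  have h : (x.norm : ℤ√d) * a = x.norm * b := by
    rw [norm_eq_mul_conj, mul_comm x, mul_assoc, mul_assoc]
    exact congrArg _ hab
  ext
  · simpa [hx] using congrArg re h
  · simpa [hx] using congrArg im h

theorem card_quotient_span_singleton {x : ℤ√d} (hx : x.norm ≠ 0) :
    Nat.card (ℤ√d ⧸ Ideal.span {x}) = x.norm.natAbs := by
  set N := Ideal.span {(x.norm : ℤ√d)}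
  have hNx : N ≤ Ideal.span {x} :=
    Ideal.span_singleton_le_span_singleton.mpr ⟨star x, norm_eq_mul_conj x⟩
  let ψ := N.mkQ ∘ₗ LinearMap.mul (ℤ√d) (ℤ√d) x
  have hrange : LinearMap.range ψ = Submodule.map N.mkQ (Ideal.span {x}) := by
    rw [LinearMap.range_comp, Ideal.range_mul']
  have hker : LinearMap.ker ψ = Ideal.span {star x} := by
    ext y
    simp only [ψ, N, LinearMap.mem_ker, LinearMap.comp_apply, LinearMap.mul_apply',
      Submodule.mkQ_apply, Submodule.Quotient.mk_eq_zero, Ideal.mem_span_singleton',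
      norm_eq_mul_conj]
    constructor
    · rintro ⟨c, hc⟩
      exact ⟨c, isLeftRegular_of_norm_ne_zero hx
        (show x * (c * star x) = x * y by rw [← hc]; ring)⟩
    · rintro ⟨c, rfl⟩
      exact ⟨c, by ring⟩
  have hcard := Submodule.card_quotient_mul_card_quotient _ _ hNx
  rw [← hrange, ← Nat.card_congr (LinearMap.quotKerEquivRange ψ).toEquiv, hker,
    Ideal.card_quotient_span_star, card_quotient_span_intCast, ← sq] at hcard
  exact Nat.pow_left_injective two_ne_zero hcard

end Zsqrtd

theorem idealNorm_dvd_natAbs_norm {d : ℤ} {I : Ideal (ℤ√d)} {x : ℤ√d} (hx : x ∈ I) :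
    idealNorm I ∣ x.norm.natAbs := by
  by_cases h0 : x.norm = 0
  · simp [h0]
  have hcard := Submodule.card_quotient_mul_card_quotient I _
    ((Ideal.span_singleton_le_iff_mem I).mpr hx)
  rw [Zsqrtd.card_quotient_span_singleton h0] at hcard
  exact Dvd.intro_left _ hcard

theorem four_dvd_norm_imp_general (p : ℕ) (hp4 : p % 4 = 3)
    (I : Ideal (ℤ√(p : ℤ))) (hn : 4 ∣ idealNorm I) :
    (∀ x ∈ I, Even (Zsqrtd.re x) ∧ Even (Zsqrtd.im x)) ∧
      ∃ I' : Ideal (ℤ√(p : ℤ)), I = Ideal.span {(2 : ℤ√(p : ℤ))} * I' := by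
  have heven : ∀ x ∈ I, Even x.re ∧ Even x.im := fun x hx =>
    Int.even_and_even_of_four_dvd_sub_mul (by omega)
      (Zsqrtd.norm_def x ▸ Int.ofNat_dvd_left.mpr (hn.trans (idealNorm_dvd_natAbs_norm hx)))
  have hle : I ≤ Ideal.span {(2 : ℤ√(p : ℤ))} := fun x hx => by
    rw [Ideal.mem_span_singleton, ← Int.cast_two, Zsqrtd.intCast_dvd, ← even_iff_two_dvd,
      ← even_iff_two_dvd]
    exact heven x hx
  exact ⟨heven, _, (Ideal.span_singleton_mul_colon_of_le hle).symm⟩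

theorem four_dvd_norm_imp (p : ℕ) (hp : p.Prime) (hp4 : p % 4 = 3)
    (I : Ideal (ℤ√(p : ℤ))) (hI : I ≠ ⊥) (hn : 4 ∣ idealNorm I) :
    (∀ x ∈ I, Even (Zsqrtd.re x) ∧ Even (Zsqrtd.im x)) ∧
      ∃ I' : Ideal (ℤ√(p : ℤ)), I = Ideal.span {(2 : ℤ√(p : ℤ))} * I' :=
  four_dvd_norm_imp_general p hp4 I hn
end

section
/- Let p ≡ 3 (mod 4) be prime with p > 3, and let d + c√p be a totally positive unit (d² - pc² = 1, c odd, d even). Then 2(d - c√p) is a square in ℤ[√p], i.e., there exist integers R, S with 2(d - c√p) = (R - S√p)². -/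
/-!
Since `d` is even, `d - 1` and `d + 1` are coprime positive integers whose product is `p c²`.
The prime `p` divides exactly one of them, so `{d - 1, d + 1} = {p a², b²}` with `a b = c`.
Adding the two factors gives `2 d = b² + p a²`, and then
`2 (d - c √p) = b² + p a² - 2 a b √p = (b - a √p)²`.
-/

namespace Int

theorem exists_sq_sq_of_isCoprime_of_mul_eq_sq {m v c : ℤ} (hv : 0 < v) (hmv : IsCoprime m v)
    (h : m * v = c ^ 2) : ∃ a b : ℤ, m = a ^ 2 ∧ v = b ^ 2 ∧ a * b = c := by
  have hm : 0 ≤ m := nonneg_of_mul_nonneg_left (h ▸ sq_nonneg c) hv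
  obtain ⟨a, ha⟩ : ∃ a : ℤ, m = a ^ 2 := by
    obtain ⟨a, ha | ha⟩ := sq_of_isCoprime hmv h
    · exact ⟨a, ha⟩
    · exact ⟨0, by nlinarith [sq_nonneg a]⟩
  obtain ⟨b, hb⟩ : ∃ b : ℤ, v = b ^ 2 := by
    obtain ⟨b, hb | hb⟩ := sq_of_isCoprime hmv.symm (by rw [mul_comm, h])
    · exact ⟨b, hb⟩
    · nlinarith [sq_nonneg b]
  have hab : (a * b) ^ 2 = c ^ 2 := by rw [mul_pow, ← ha, ← hb, h]
  rcases sq_eq_sq_iff_eq_or_eq_neg.mp hab with hc | hc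
  · exact ⟨a, b, ha, hb, hc⟩
  · exact ⟨-a, b, by rw [ha, neg_sq], hb, by rw [neg_mul, hc, neg_neg]⟩

theorem exists_add_eq_mul_sq_add_sq_of_mul_eq_mul_sq {p u v c : ℤ} (hp : Prime p) (hu : 0 < u)
    (hv : 0 < v) (huv : IsCoprime u v) (h : u * v = p * c ^ 2) :
    ∃ a b : ℤ, u + v = p * a ^ 2 + b ^ 2 ∧ a * b = c := by
  wlog hpu : p ∣ u generalizing u v
  · have hpv : p ∣ v := (hp.dvd_or_dvd ⟨c ^ 2, h⟩).resolve_left hpu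
    obtain ⟨a, b, hvu, hab⟩ := this hv hu huv.symm (by rw [mul_comm, h]) hpv
    exact ⟨a, b, by rw [add_comm, hvu], hab⟩
  obtain ⟨m, rfl⟩ := hpu
  have hmv : m * v = c ^ 2 := mul_left_cancel₀ hp.ne_zero (by rw [← mul_assoc, h])
  obtain ⟨a, b, rfl, rfl, hab⟩ :=
    exists_sq_sq_of_isCoprime_of_mul_eq_sq hv (huv.of_isCoprime_of_dvd_left (dvd_mul_left m p)) hmv
  exact ⟨a, b, rfl, hab⟩

end Int

theorem Zsqrtd.sq_mk {d : ℤ} (x y : ℤ) :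
    (⟨x, y⟩ : ℤ√d) ^ 2 = ⟨x ^ 2 + d * y ^ 2, 2 * x * y⟩ := by
  ext <;> simp only [sq, re_mul, im_mul] <;> ring

theorem two_mul_unit_is_square_general (p : ℕ) (hp : p.Prime)
    (d c : ℤ) (hd : 0 < d) (hpell : d ^ 2 - (p : ℤ) * c ^ 2 = 1)
    (hdeven : Even d) :
    ∃ R S : ℤ, (2 : ℤ√(p : ℤ)) * (⟨d, -c⟩ : ℤ√(p : ℤ)) = (⟨R, -S⟩ : ℤ√(p : ℤ)) ^ 2 := by
  obtain ⟨e, rfl⟩ := hdeven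
  have hcop : IsCoprime (e + e - 1) (e + e + 1) := ⟨e, 1 - e, by ring⟩
  obtain ⟨a, b, hsum, hab⟩ := Int.exists_add_eq_mul_sq_add_sq_of_mul_eq_mul_sq (c := c)
    (Nat.prime_iff_prime_int.mp hp) (by omega) (by omega) hcop (by linear_combination hpell)
  refine ⟨b, a, ?_⟩
  rw [Zsqrtd.sq_mk]
  ext
  · simp only [Zsqrtd.re_mul, Zsqrtd.re_ofNat, Zsqrtd.im_ofNat]
    linear_combination hsum
  · simp only [Zsqrtd.im_mul, Zsqrtd.re_ofNat, Zsqrtd.im_ofNat]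
    linear_combination 2 * hab

theorem two_mul_unit_is_square (p : ℕ) (hp : p.Prime) (hp4 : p % 4 = 3) (hp3 : 3 < p)
    (d c : ℤ) (hd : 0 < d) (hc : 0 < c) (hpell : d ^ 2 - (p : ℤ) * c ^ 2 = 1)
    (hcodd : Odd c) (hdeven : Even d) :
    ∃ R S : ℤ, (2 : ℤ√(p : ℤ)) * (⟨d, -c⟩ : ℤ√(p : ℤ)) = (⟨R, -S⟩ : ℤ√(p : ℤ)) ^ 2 :=
  two_mul_unit_is_square_general p hp d c hd hpell hdeven
end

section
/- Let p ≡ 3 (mod 4) be prime and let b odd with b ≡ 1 (mod 4). If p ≡ 7 (mod 8), c odd, d even with d² - pc² = 1, a an integer with b | a² - p and gcd(2(d-ac), b) = 1, then the Jacobi symbol (2(d-ac)/b) = 1. -/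
/-!
From `(d + 1)(d - 1) = p c²` with `d + 1`, `d - 1` coprime, one factor is a square and the other
`p` times a square. Both are odd, so as `p ≡ 7 (mod 8)` and odd squares are `1 (mod 8)`, the one
divisible by `p` must be `d - 1`: `d + 1 = s²`, `d - 1 = p t²`, `c = s t`, i.e.
`2(d - c√p) = (s - t√p)²`. Reducing modulo `b`, where `p ≡ a²`, gives `2(d - a c) ≡ (s - a t)²`,
a square coprime to `b`.
-/

namespace Int

theorem sq_emod_eight_of_odd {x : ℤ} (hx : Odd x) : x ^ 2 % 8 = 1 := by
  obtain ⟨k, rfl⟩ := hx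
  obtain ⟨m, hm⟩ := Int.even_mul_succ_self k
  have : (2 * k + 1) ^ 2 = 8 * m + 1 := by linear_combination 4 * hm
  omega

theorem mul_sq_sub_sq_ne_two {p x y : ℤ} (hp : p % 8 = 7) (hx : Odd x) (hy : Odd y) :
    p * x ^ 2 - y ^ 2 ≠ 2 := by
  have hx8 := sq_emod_eight_of_odd hx
  have hy8 := sq_emod_eight_of_odd hy
  have : p * x ^ 2 % 8 = 7 := by rw [Int.mul_emod, hp, hx8]; rfl
  omega

theorem isCoprime_add_one_sub_one_of_even {d : ℤ} (hd : Even d) : IsCoprime (d + 1) (d - 1) := by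
  obtain ⟨k, rfl⟩ := hd
  exact ⟨1 - k, k, by ring⟩

theorem eq_sq_of_isCoprime_of_nonneg {u w c : ℤ} (huw : IsCoprime u w) (hu : 0 ≤ u)
    (heq : u * w = c ^ 2) : ∃ s, u = s ^ 2 := by
  obtain ⟨s, hs | hs⟩ := Int.sq_of_isCoprime huw heq
  · exact ⟨s, hs⟩
  · exact ⟨s, by nlinarith [sq_nonneg s]⟩

theorem exists_sq_sq_of_mul_eq_sq {u w c : ℤ} (huw : IsCoprime u w) (hu : 0 ≤ u) (hw : 0 ≤ w)
    (heq : u * w = c ^ 2) : ∃ s t, u = s ^ 2 ∧ w = t ^ 2 ∧ c = s * t := by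
  obtain ⟨s, rfl⟩ := eq_sq_of_isCoprime_of_nonneg huw hu heq
  obtain ⟨t, rfl⟩ := eq_sq_of_isCoprime_of_nonneg huw.symm hw (by rw [mul_comm, heq])
  have : (c - s * t) * (c + s * t) = 0 := by linear_combination -heq
  rcases mul_eq_zero.mp this with h | h
  · exact ⟨s, t, rfl, rfl, by linarith⟩
  · exact ⟨s, -t, rfl, by ring, by linarith⟩

theorem exists_sq_of_mul_eq_prime_mul_sq {p : ℕ} (hp : p.Prime) {u v c : ℤ} (huv : IsCoprime u v)
    (hu : 0 ≤ u) (hv : 0 ≤ v) (heq : u * v = p * c ^ 2) :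
    ∃ s t, c = s * t ∧ (u = s ^ 2 ∧ v = p * t ^ 2 ∨ u = p * s ^ 2 ∧ v = t ^ 2) := by
  have hp0 : (0 : ℤ) < p := mod_cast hp.pos
  rcases (Nat.prime_iff_prime_int.mp hp).dvd_mul.mp ⟨c ^ 2, heq⟩ with ⟨w, rfl⟩ | ⟨w, rfl⟩
  · have hw : 0 ≤ w := nonneg_of_mul_nonneg_right hu hp0
    obtain ⟨s, t, hs, ht, hc⟩ := exists_sq_sq_of_mul_eq_sq (c := c) (huv.of_mul_left_right) hw hv
      (mul_left_cancel₀ hp0.ne' (by linear_combination heq))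
    exact ⟨s, t, hc, .inr ⟨by rw [hs], ht⟩⟩
  · have hw : 0 ≤ w := nonneg_of_mul_nonneg_right hv hp0
    obtain ⟨s, t, hs, ht, hc⟩ := exists_sq_sq_of_mul_eq_sq (c := c) (huv.of_mul_right_right) hu hw
      (mul_left_cancel₀ hp0.ne' (by linear_combination heq))
    exact ⟨s, t, hc, .inl ⟨hs, by rw [ht]⟩⟩

end Int

theorem exists_two_mul_eq_sq_add_mul_sq_of_pell {p : ℕ} (hp : p.Prime) (hp8 : p % 8 = 7)
    {d c : ℤ} (hd : 0 < d) (hdeven : Even d) (hpell : d ^ 2 - p * c ^ 2 = 1) :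
    ∃ s t : ℤ, 2 * d = s ^ 2 + p * t ^ 2 ∧ c = s * t := by
  have hd2 : 2 ≤ d := by obtain ⟨k, rfl⟩ := hdeven; omega
  obtain ⟨s, t, hc, ⟨hs, ht⟩ | ⟨hs, ht⟩⟩ :=
    Int.exists_sq_of_mul_eq_prime_mul_sq (c := c) hp (Int.isCoprime_add_one_sub_one_of_even hdeven)
      (by omega) (by omega) (by linear_combination hpell)
  · exact ⟨s, t, by linear_combination hs + ht, hc⟩
  · have hsodd : Odd s := (Int.odd_pow' two_ne_zero).mp (Int.odd_mul.mp (hs ▸ hdeven.add_one)).2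
    have htodd : Odd t := (Int.odd_pow' two_ne_zero).mp (ht ▸ hdeven.sub_odd odd_one)
    exact absurd (by linear_combination ht - hs) <|
      Int.mul_sq_sub_sq_ne_two (p := p) (by omega) hsodd htodd

theorem jacobiSym_eq_one_of_modEq_sq {x y : ℤ} {b : ℕ} (h : x ≡ y ^ 2 [ZMOD b])
    (hx : x.gcd b = 1) : jacobiSym x b = 1 := by
  have hy : IsCoprime (y ^ 2) b := by
    rw [Int.isCoprime_iff_gcd_eq_one, ← Int.gcd_emod, ← h, Int.gcd_emod, hx]
  rw [jacobiSym.mod_left' h]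
  exact jacobiSym.sq_one' (Int.isCoprime_iff_gcd_eq_one.mp ((IsCoprime.pow_left_iff two_pos).mp hy))

theorem jacobiSym_two_mul_eq_one_general (p : ℕ) (hp : p.Prime) (hp8 : p % 8 = 7)
    (d c a : ℤ) (b : ℕ) (hd : 0 < d)
    (hpell : d ^ 2 - (p : ℤ) * c ^ 2 = 1) (hdeven : Even d)
    (hdvd : (b : ℤ) ∣ a ^ 2 - (p : ℤ))
    (hcop : Int.gcd (2 * (d - a * c)) b = 1) :
    jacobiSym (2 * (d - a * c)) b = 1 := by
  obtain ⟨s, t, h2d, rfl⟩ := exists_two_mul_eq_sq_add_mul_sq_of_pell hp hp8 hd hdeven hpell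
  refine jacobiSym_eq_one_of_modEq_sq (y := s - a * t) (Int.modEq_iff_dvd.mpr ?_) hcop
  have : (s - a * t) ^ 2 - 2 * (d - a * (s * t)) = t ^ 2 * (a ^ 2 - p) := by
    linear_combination -h2d
  exact this ▸ dvd_mul_of_dvd_right hdvd _

theorem jacobiSym_two_mul_eq_one (p : ℕ) (hp : p.Prime) (hp4 : p % 4 = 3) (hp8 : p % 8 = 7)
    (d c a : ℤ) (b : ℕ) (hd : 0 < d) (hc : 0 < c)
    (hpell : d ^ 2 - (p : ℤ) * c ^ 2 = 1) (hcodd : Odd c) (hdeven : Even d)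
    (hbodd : Odd b) (hb4 : b % 4 = 1) (hdvd : (b : ℤ) ∣ a ^ 2 - (p : ℤ))
    (hcop : Int.gcd (2 * (d - a * c)) b = 1) :
    jacobiSym (2 * (d - a * c)) b = 1 :=
  jacobiSym_two_mul_eq_one_general p hp hp8 d c a b hd hpell hdeven hdvd hcop
end
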